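/- If a CF program terminates on all inputs and has no call overlap (no defined function is ever called twice with the same tuple of argument values on any input), then it runs in time polynomial in the input length, i.e., it is in CFpoly. -/

import Mathlib

/-! # Cons-free programs (CF / CFTR / CFpoly / NCF) and Turing-machine complexity classes -/

/-- Values: booleans and bit strings. -/
inductive Val : Type
  | bool : Bool → Val
  | str  : List Bool → Val
deriving DecidableEq, Inhabited

/-- Base operations of cons-free programs. -/
inductive BOp : Type
  | not | null | head | tail
deriving DecidableEq, Inhabited

/-- Expressions.  `amb` is the nondeterministic choice construct of NCF;
CF programs are exactly the choice-free programs. -/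
inductive Exp : Type
  | tt   : Exp
  | ff   : Exp
  | nil  : Exp
  | var  : Nat → Exp
  | base : BOp → Exp → Exp
  | ite  : Exp → Exp → Exp → Exp
  | call : Nat → List Exp → Exp
  | amb  : Exp → Exp → Exp
deriving Inhabited

/-- A function definition `f x1 ... xm = e`: arity `m` and body `e`
(variables are de Bruijn-style indices into the argument list). -/
structure Defn where
  arity : Nat
  body  : Exp
deriving Inhabited

/-- A program is a finite list of function definitions; the first one is the entry point. -/
abbrev Prog := List Defn

/-- Body of the entry (first) function. -/
def Prog.entry (p : Prog) : Exp := p.headI.body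

/-- Semantics of the base functions (partial). -/
def evalBase : BOp → Val → Option Val
  | .not,  .bool b       => some (.bool (!b))
  | .null, .str s        => some (.bool s.isEmpty)
  | .head, .str (b :: _) => some (.bool b)
  | .tail, .str (_ :: s) => some (.str s)
  | _,     _             => none

/- Call-by-value big-step semantics.  `EvalH p ρ e v n h` means: in environment `ρ`
the expression `e` evaluates to `v`, by a computation (proof) tree with `n` nodes
whose call history (the sequence of configurations `(f, arguments)` of calls to
program-defined functions, in evaluation order) is `h`. -/
mutual
inductive EvalH (p : Prog) : List Val → Exp → Val → Nat → List (Nat × List Val) → Prop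
  | tt  {ρ} : EvalH p ρ .tt (.bool true) 1 []
  | ff  {ρ} : EvalH p ρ .ff (.bool false) 1 []
  | nil {ρ} : EvalH p ρ .nil (.str []) 1 []
  | var {ρ : List Val} {i : Nat} {v} : ρ[i]? = some v → EvalH p ρ (.var i) v 1 []
  | base {ρ op e v w n h} :
      EvalH p ρ e v n h → evalBase op v = some w →
      EvalH p ρ (.base op e) w (n + 1) h
  | iteT {ρ e0 e1 e2 v n0 n1 h0 h1} :
      EvalH p ρ e0 (.bool true) n0 h0 → EvalH p ρ e1 v n1 h1 →
      EvalH p ρ (.ite e0 e1 e2) v (n0 + n1 + 1) (h0 ++ h1)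
  | iteF {ρ e0 e1 e2 v n0 n2 h0 h2} :
      EvalH p ρ e0 (.bool false) n0 h0 → EvalH p ρ e2 v n2 h2 →
      EvalH p ρ (.ite e0 e1 e2) v (n0 + n2 + 1) (h0 ++ h2)
  | ambL {ρ e1 e2 v n h} :
      EvalH p ρ e1 v n h → EvalH p ρ (.amb e1 e2) v (n + 1) h
  | ambR {ρ e1 e2 v n h} :
      EvalH p ρ e2 v n h → EvalH p ρ (.amb e1 e2) v (n + 1) h
  | call {ρ : List Val} {f : Nat} {es ws d v m n hs h} :
      p[f]? = some d → EvalArgsH p ρ es ws m hs → ws.length = d.arity →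
      EvalH p ws d.body v n h →
      EvalH p ρ (.call f es) v (m + n + 1) (hs ++ (f, ws) :: h)

inductive EvalArgsH (p : Prog) : List Val → List Exp → List Val → Nat → List (Nat × List Val) → Prop
  | nil {ρ} : EvalArgsH p ρ [] [] 0 []
  | cons {ρ e es v vs n m h hs} :
      EvalH p ρ e v n h → EvalArgsH p ρ es vs m hs →
      EvalArgsH p ρ (e :: es) (v :: vs) (n + m) (h ++ hs)
end

/-- `p, ρ ⊢ e → v`. -/
def Eval (p : Prog) (ρ : List Val) (e : Exp) (v : Val) : Prop := ∃ n h, EvalH p ρ e v n h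

/-- Pointwise evaluation of a list of expressions. -/
def EvalList (p : Prog) (ρ : List Val) (es : List Exp) (ws : List Val) : Prop :=
  List.Forall₂ (Eval p ρ) es ws

/-- `⟦p⟧(x) = v` with computation-tree size `n` and call history `h`. -/
def RunH (p : Prog) (x : List Bool) (v : Val) (n : Nat) (h : List (Nat × List Val)) : Prop :=
  EvalH p [Val.str x] p.entry v n h

/-- `⟦p⟧(x) = v`. -/
def Run (p : Prog) (x : List Bool) (v : Val) : Prop := ∃ n h, RunH p x v n h

/-- `time_p(x) = n`: the computation tree `T^{p,x}` has `n` nodes. -/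
def TimeIs (p : Prog) (x : List Bool) (n : Nat) : Prop := ∃ v h, RunH p x v n h

/-- Deterministic decision: `p` terminates on every input, answering `True` exactly on `X`. -/
def Decides (p : Prog) (X : Set (List Bool)) : Prop :=
  ∀ x : List Bool, (x ∈ X ∧ Run p x (.bool true)) ∨ (x ∉ X ∧ Run p x (.bool false))

/-- Nondeterministic decision: `x ∈ X` iff some computation `⟦p⟧(x) ⇝ True` exists. -/
def NDecides (p : Prog) (X : Set (List Bool)) : Prop :=
  ∀ x : List Bool, x ∈ X ↔ Run p x (.bool true)

/-- `Reach_p(x)`: configurations `(f, ρ)` called at least once in some computation of `p` on `x`. -/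
def Reach (p : Prog) (x : List Bool) : Set (Nat × List Val) :=
  {c | ∃ v n h, RunH p x v n h ∧ c ∈ h}

/-- `V_x = {0,1} ∪ suffixes(x)`: the range of variation on input `x`. -/
def Vx (x : List Bool) : Set Val :=
  {v | (∃ b, v = .bool b) ∨ ∃ s, v = .str s ∧ s <:+ x}

/-- An expression is choice-free (belongs to the CF fragment). -/
inductive NoChoice : Exp → Prop
  | tt : NoChoice .tt
  | ff : NoChoice .ff
  | nil : NoChoice .nil
  | var (i) : NoChoice (.var i)
  | base (op) {e} : NoChoice e → NoChoice (.base op e)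
  | ite {a b c} : NoChoice a → NoChoice b → NoChoice c → NoChoice (.ite a b c)
  | call (f) {es} : (∀ e ∈ es, NoChoice e) → NoChoice (.call f es)

/-- A CF program: a cons-free program with no nondeterministic choice. -/
def CFProg (p : Prog) : Prop := ∀ d ∈ p, NoChoice d.body

/-- Does the expression contain a call to a program-defined function? -/
def hasCall : Exp → Bool
  | .base _ e => hasCall e
  | .ite a b c => hasCall a || hasCall b || hasCall c
  | .call _ _ => true
  | .amb a b => hasCall a || hasCall b
  | _ => false

/-- The classification map `α` with `X = 0 < T = 1 < N = 2`:
`α e = 0` if `e` has no calls; `α e = 1` if all calls in `e` are in tail position;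
`α e = 2` otherwise. -/
def alpha : Exp → Nat
  | .base _ e => if hasCall e then 2 else 0
  | .ite a b c => if hasCall a then 2 else max (alpha b) (alpha c)
  | .call _ es => if es.all (fun e => !hasCall e) then 1 else 2
  | .amb a b => max (alpha a) (alpha b)
  | _ => 0

/-- All calls in every definition body are in tail position (`α(e^f) ∈ {X, T}`). -/
def TRProg (p : Prog) : Prop := ∀ d ∈ p, alpha d.body ≤ 1

/-- A CFTR program: a tail-recursive cons-free program. -/
def CFTRProg (p : Prog) : Prop := CFProg p ∧ TRProg p

/-- Every call in the program is a tail call or a linear call, i.e. no call to a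
defined function is nested inside the argument of another call. -/
def linearOnly : Exp → Bool
  | .base _ e => linearOnly e
  | .ite a b c => linearOnly a && linearOnly b && linearOnly c
  | .call _ es => es.all (fun e => !hasCall e)
  | .amb a b => linearOnly a && linearOnly b
  | _ => true

/-- A CFpoly program: a CF program that terminates on all inputs, in polynomial native time. -/
def CFpolyProg (p : Prog) : Prop :=
  CFProg p ∧ (∀ x, ∃ v, Run p x v) ∧
    ∃ π : Polynomial ℕ, ∀ x n, TimeIs p x n → n ≤ π.eval x.length

/-- A judgment `p, ρ ⊢ e → v` occurs in the computation tree `T^{p,x}`. -/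
inductive Occurs (p : Prog) (x : List Bool) : List Val → Exp → Val → Prop
  | root {v} : Eval p [Val.str x] p.entry v → Occurs p x [Val.str x] p.entry v
  | base {ρ op e v w} : Occurs p x ρ (.base op e) v → Eval p ρ e w → Occurs p x ρ e w
  | iteTest {ρ a b c v w} : Occurs p x ρ (.ite a b c) v → Eval p ρ a w → Occurs p x ρ a w
  | iteT {ρ a b c v} : Occurs p x ρ (.ite a b c) v → Eval p ρ a (.bool true) →
      Eval p ρ b v → Occurs p x ρ b v
  | iteF {ρ a b c v} : Occurs p x ρ (.ite a b c) v → Eval p ρ a (.bool false) →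
      Eval p ρ c v → Occurs p x ρ c v
  | ambL {ρ a b v} : Occurs p x ρ (.amb a b) v → Eval p ρ a v → Occurs p x ρ a v
  | ambR {ρ a b v} : Occurs p x ρ (.amb a b) v → Eval p ρ b v → Occurs p x ρ b v
  | arg {ρ f es v e w} : Occurs p x ρ (.call f es) v → e ∈ es → Eval p ρ e w → Occurs p x ρ e w
  | body {ρ f es ws d v} : Occurs p x ρ (.call f es) v → p[f]? = some d →
      EvalList p ρ es ws → Eval p ws d.body v → Occurs p x ws d.body v

/- The deterministic left-to-right bottom-up evaluator, with fuel bounding call depth. -/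
mutual
def evalFuel (p : Prog) : Nat → List Val → Exp → Option Val
  | _, _, .tt => some (.bool true)
  | _, _, .ff => some (.bool false)
  | _, _, .nil => some (.str [])
  | _, ρ, .var i => ρ[i]?
  | k, ρ, .base op e => (evalFuel p k ρ e).bind (evalBase op)
  | k, ρ, .ite a b c =>
      match evalFuel p k ρ a with
      | some (.bool true) => evalFuel p k ρ b
      | some (.bool false) => evalFuel p k ρ c
      | _ => none
  | _, _, .amb _ _ => none
  | k, ρ, .call f es =>
      match evalArgsFuel p k ρ es with
      | some ws =>
          match k, p[f]? with
          | k' + 1, some d => if ws.length = d.arity then evalFuel p k' ws d.body else none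
          | _, _ => none
      | none => none
termination_by k _ e => (k, sizeOf e)
decreasing_by
  all_goals first
    | decreasing_tactic
    | (simp only [wfParam] at *; apply Prod.Lex.left; omega)

def evalArgsFuel (p : Prog) : Nat → List Val → List Exp → Option (List Val)
  | _, _, [] => some []
  | k, ρ, e :: es =>
      match evalFuel p k ρ e, evalArgsFuel p k ρ es with
      | some v, some vs => some (v :: vs)
      | _, _ => none
termination_by k _ es => (k, sizeOf es)
end

/-! ## Turing machines -/

/-- Head moves. -/
inductive Dir : Type
  | L | S | R
deriving DecidableEq, Inhabited

def Dir.z : Dir → ℤ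
  | .L => -1
  | .S => 0
  | .R => 1

/-- A configuration: control state, input-head position, work-head position, work tape. -/
structure Cfg (Q : Type) where
  q : Q
  ipos : ℤ
  wpos : ℤ
  tape : ℤ → Option Bool

/-- The symbol of the read-only input tape at position `i` (blank outside the input). -/
def inputSym (x : List Bool) (i : ℤ) : Option Bool :=
  if 0 ≤ i then x[i.toNat]? else none

/-- A deterministic Turing machine with a read-only input tape and a read-write work tape. -/
structure TM where
  Q : Type
  [fin : Fintype Q]
  [deq : DecidableEq Q]
  δ : Q → Option Bool → Option Bool → Q × Option Bool × Dir × Dir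
  start : Q
  accept : Q
  reject : Q

attribute [instance] TM.fin TM.deq

def TM.init (M : TM) : Cfg M.Q := ⟨M.start, 0, 0, fun _ => none⟩

/-- One deterministic step (the accepting and rejecting states are halting). -/
def TM.step (M : TM) (x : List Bool) (c : Cfg M.Q) : Cfg M.Q :=
  if c.q = M.accept ∨ c.q = M.reject then c
  else
    let r := M.δ c.q (inputSym x c.ipos) (c.tape c.wpos)
    ⟨r.1, c.ipos + r.2.2.1.z, c.wpos + r.2.2.2.z,
      fun j => if j = c.wpos then r.2.1 else c.tape j⟩

/-- Configuration after `t` steps on input `x`. -/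
def TM.conf (M : TM) (x : List Bool) (t : Nat) : Cfg M.Q := (M.step x)^[t] M.init

/-- `M` decides `X`: reaches `accept` on members, `reject` on non-members. -/
def TM.DecidesTM (M : TM) (X : Set (List Bool)) : Prop :=
  ∀ x : List Bool,
    (x ∈ X → ∃ t, (M.conf x t).q = M.accept) ∧ (x ∉ X → ∃ t, (M.conf x t).q = M.reject)

/-- The work head of `M` stays within `s` cells of the origin on input `x`. -/
def TM.SpaceBound (M : TM) (x : List Bool) (s : Nat) : Prop :=
  ∀ t, ((M.conf x t).wpos).natAbs ≤ s

/-- `M` halts within `T` steps on input `x`. -/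
def TM.HaltsIn (M : TM) (x : List Bool) (T : Nat) : Prop :=
  ∃ t ≤ T, (M.conf x t).q = M.accept ∨ (M.conf x t).q = M.reject

/-- LOGSPACE: decidable by a deterministic TM in `O(log n)` work space. -/
def LOGSPACE : Set (Set (List Bool)) :=
  {X | ∃ M : TM, M.DecidesTM X ∧
        ∃ C : Nat, ∀ x, M.SpaceBound x (C * (Nat.log 2 x.length + 1))}

/-- PTIME: decidable by a deterministic TM in time `O(n^k)` for some `k`. -/
def PTIME : Set (Set (List Bool)) :=
  {X | ∃ M : TM, M.DecidesTM X ∧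
        ∃ C k : Nat, ∀ x, M.HaltsIn x (C * (x.length + 1) ^ k)}

/-- A nondeterministic Turing machine (read-only input tape, read-write work tape). -/
structure NTM where
  Q : Type
  [fin : Fintype Q]
  δ : Q → Option Bool → Option Bool → Finset (Q × Option Bool × Dir × Dir)
  start : Q
  accept : Q

attribute [instance] NTM.fin

def NTM.init (M : NTM) : Cfg M.Q := ⟨M.start, 0, 0, fun _ => none⟩

/-- One nondeterministic step. -/
def NTM.Step (M : NTM) (x : List Bool) (c c' : Cfg M.Q) : Prop :=
  ∃ r ∈ M.δ c.q (inputSym x c.ipos) (c.tape c.wpos),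
    c' = ⟨r.1, c.ipos + r.2.2.1.z, c.wpos + r.2.2.2.z,
          fun j => if j = c.wpos then r.2.1 else c.tape j⟩

/-- A step staying within work space `s`. -/
def NTM.StepB (M : NTM) (x : List Bool) (s : Nat) (c c' : Cfg M.Q) : Prop :=
  M.Step x c c' ∧ c'.wpos.natAbs ≤ s

/-- Some computation path within work space `s` accepts `x`. -/
def NTM.AcceptsInSpace (M : NTM) (x : List Bool) (s : Nat) : Prop :=
  ∃ c : Cfg M.Q, Relation.ReflTransGen (M.StepB x s) M.init c ∧ c.q = M.accept

/-- Nondeterministic space classes `NSPACE(O(f))`. -/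
def NSPACEF (f : Nat → Nat) : Set (Set (List Bool)) :=
  {X | ∃ (M : NTM) (C : Nat), ∀ x, x ∈ X ↔ M.AcceptsInSpace x (C * (f x.length + 1))}

/-- NLOGSPACE = NSPACE(O(log n)). -/
def NLOGSPACE : Set (Set (List Bool)) := NSPACEF (Nat.log 2)

/-! ## Decision classes of the programming languages -/

def decideCFTR : Set (Set (List Bool)) := {X | ∃ p : Prog, CFTRProg p ∧ Decides p X}
def decideCF : Set (Set (List Bool)) := {X | ∃ p : Prog, CFProg p ∧ Decides p X}
def decideCFpoly : Set (Set (List Bool)) := {X | ∃ p : Prog, CFpolyProg p ∧ Decides p X}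
def decideNCF : Set (Set (List Bool)) := {X | ∃ p : Prog, NDecides p X}
def decideNCFTR : Set (Set (List Bool)) := {X | ∃ p : Prog, TRProg p ∧ NDecides p X}



/-!
In a cons-free program every value arising in a computation on input `x` is a boolean or a
suffix of `x`: the set `Vx x` contains the constants and is closed under the base functions.
Hence there are at most `|p| · (|x| + 4) ^ A` call configurations `(f, args)`, where `A` bounds
the arities, and without call overlap each of them occurs at most once in the call history `h`.
Every node of the computation tree lies either in the entry expression or in one of the `|h|`
function bodies entered, outside the nested calls, so the tree has at most
`sizeOf p.entry + (B + 1) · |h|` nodes, where `B` bounds the sizes of the bodies.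
-/

open scoped Finset

structure BaseClosed (S : Set Val) : Prop where
  bool_mem : ∀ b, Val.bool b ∈ S
  nil_mem : Val.str [] ∈ S
  evalBase_mem : ∀ {op v w}, v ∈ S → evalBase op v = some w → w ∈ S

theorem baseClosed_Vx (x : List Bool) : BaseClosed (Vx x) where
  bool_mem b := Or.inl ⟨b, rfl⟩
  nil_mem := Or.inr ⟨[], rfl, List.nil_suffix⟩
  evalBase_mem {op v w} hv hw := by
    rcases op <;> rcases v with b | _ | ⟨b, s⟩ <;> simp [evalBase] at hw <;> subst hw
    all_goals first
      | exact Or.inl ⟨_, rfl⟩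
      | exact Or.inr ⟨s, rfl, (List.suffix_cons b s).trans (by simpa [Vx] using hv)⟩

def vxFinset (x : List Bool) : Finset Val :=
  insert (.bool true) (insert (.bool false) ((x.tails.map Val.str).toFinset))

theorem coe_vxFinset (x : List Bool) : (vxFinset x : Set Val) = Vx x := by
  ext (b | s)
  · cases b <;> simp [vxFinset, Vx]
  · simp [vxFinset, Vx, List.mem_tails]

theorem card_vxFinset_le (x : List Bool) : #(vxFinset x) ≤ x.length + 3 :=
  calc #(vxFinset x) ≤ #(x.tails.map Val.str).toFinset + 2 :=
        (Finset.card_insert_le _ _).trans (Nat.succ_le_succ (Finset.card_insert_le _ _))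
    _ ≤ (x.tails.map Val.str).length + 2 := by grw [List.toFinset_card_le]
    _ = x.length + 3 := by simp

section

variable {p : Prog} {S : Set Val} {B : ℕ}

mutual
theorem EvalH.mem_of_baseClosed (hS : BaseClosed S) :
    ∀ {ρ e v n h}, EvalH p ρ e v n h → (∀ w ∈ ρ, w ∈ S) →
      v ∈ S ∧ ∀ c ∈ h, ∀ w ∈ c.2, w ∈ S
  | _, _, _, _, _, .tt, _ | _, _, _, _, _, .ff, _ => ⟨hS.bool_mem _, List.forall_mem_nil _⟩
  | _, _, _, _, _, .nil, _ => ⟨hS.nil_mem, List.forall_mem_nil _⟩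
  | _, _, _, _, _, .var hv, hρ => ⟨hρ _ (List.mem_of_getElem? hv), List.forall_mem_nil _⟩
  | _, _, _, _, _, .base d hb, hρ =>
    have ⟨hv, hh⟩ := d.mem_of_baseClosed hS hρ
    ⟨hS.evalBase_mem hv hb, hh⟩
  | _, _, _, _, _, .iteT d0 d1, hρ | _, _, _, _, _, .iteF d0 d1, hρ =>
    have ⟨hv, hh⟩ := d1.mem_of_baseClosed hS hρ
    ⟨hv, List.forall_mem_append.2 ⟨(d0.mem_of_baseClosed hS hρ).2, hh⟩⟩
  | _, _, _, _, _, .ambL d, hρ | _, _, _, _, _, .ambR d, hρ => d.mem_of_baseClosed hS hρ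
  | _, _, _, _, _, .call _ da _ db, hρ =>
    have ⟨hws, hhs⟩ := da.mem_of_baseClosed hS hρ
    have ⟨hv, hh⟩ := db.mem_of_baseClosed hS hws
    ⟨hv, List.forall_mem_append.2 ⟨hhs, List.forall_mem_cons.2 ⟨hws, hh⟩⟩⟩

theorem EvalArgsH.mem_of_baseClosed (hS : BaseClosed S) :
    ∀ {ρ es ws m h}, EvalArgsH p ρ es ws m h → (∀ w ∈ ρ, w ∈ S) →
      (∀ w ∈ ws, w ∈ S) ∧ ∀ c ∈ h, ∀ w ∈ c.2, w ∈ S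
  | _, _, _, _, _, .nil, _ => ⟨List.forall_mem_nil _, List.forall_mem_nil _⟩
  | _, _, _, _, _, .cons d ds, hρ =>
    have ⟨hv, hh⟩ := d.mem_of_baseClosed hS hρ
    have ⟨hvs, hhs⟩ := ds.mem_of_baseClosed hS hρ
    ⟨List.forall_mem_cons.2 ⟨hv, hvs⟩, List.forall_mem_append.2 ⟨hh, hhs⟩⟩
end

mutual
theorem EvalH.calls_defined :
    ∀ {ρ e v n h}, EvalH p ρ e v n h → ∀ c ∈ h, ∃ d, p[c.1]? = some d ∧ c.2.length = d.arity
  | _, _, _, _, _, .tt | _, _, _, _, _, .ff | _, _, _, _, _, .nil | _, _, _, _, _, .var _ =>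
    List.forall_mem_nil _
  | _, _, _, _, _, .base d _ | _, _, _, _, _, .ambL d | _, _, _, _, _, .ambR d => d.calls_defined
  | _, _, _, _, _, .iteT d0 d1 | _, _, _, _, _, .iteF d0 d1 =>
    List.forall_mem_append.2 ⟨d0.calls_defined, d1.calls_defined⟩
  | _, _, _, _, _, .call hf da hl db =>
    List.forall_mem_append.2
      ⟨da.calls_defined, List.forall_mem_cons.2 ⟨⟨_, hf, hl⟩, db.calls_defined⟩⟩

theorem EvalArgsH.calls_defined :
    ∀ {ρ es ws m h}, EvalArgsH p ρ es ws m h →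
      ∀ c ∈ h, ∃ d, p[c.1]? = some d ∧ c.2.length = d.arity
  | _, _, _, _, _, .nil => List.forall_mem_nil _
  | _, _, _, _, _, .cons d ds => List.forall_mem_append.2 ⟨d.calls_defined, ds.calls_defined⟩
end

mutual
theorem EvalH.size_le (hB : ∀ d ∈ p, sizeOf d.body ≤ B) :
    ∀ {ρ e v n h}, EvalH p ρ e v n h → n ≤ sizeOf e + (B + 1) * h.length
  | _, _, _, _, _, .tt | _, _, _, _, _, .ff | _, _, _, _, _, .nil | _, _, _, _, _, .var _ => by
    simp
  | _, _, _, _, _, .base d _ | _, _, _, _, _, .ambL d | _, _, _, _, _, .ambR d => by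
    have := d.size_le hB
    simp only [Exp.base.sizeOf_spec, Exp.amb.sizeOf_spec]
    omega
  | _, _, _, _, _, .iteT d0 d1 | _, _, _, _, _, .iteF d0 d1 => by
    have := d0.size_le hB
    have := d1.size_le hB
    simp only [Exp.ite.sizeOf_spec, List.length_append, mul_add]
    omega
  | _, _, _, _, _, .call hf da _ db => by
    have := da.size_le hB
    have := db.size_le hB
    have := hB _ (List.mem_of_getElem? hf)
    simp only [Exp.call.sizeOf_spec, List.length_append, List.length_cons, mul_add]
    omega

theorem EvalArgsH.size_le (hB : ∀ d ∈ p, sizeOf d.body ≤ B) :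
    ∀ {ρ es ws m h}, EvalArgsH p ρ es ws m h → m ≤ sizeOf es + (B + 1) * h.length
  | _, _, _, _, _, .nil => Nat.zero_le _
  | _, _, _, _, _, .cons d ds => by
    have := d.size_le hB
    have := ds.size_le hB
    simp only [List.cons.sizeOf_spec, List.length_append, mul_add]
    omega
end

end

/-- A list of length at most `A` is determined by its entries `l[i]?` for `i < A`. -/
theorem Finset.card_le_pow_of_length_le {α : Type*} [DecidableEq α] {S : Finset α} {A : ℕ}
    {L : Finset (List α)} (hL : ∀ l ∈ L, l.length ≤ A ∧ ∀ a ∈ l, a ∈ S) :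
    #L ≤ (#S + 1) ^ A := by
  let T := Fintype.piFinset fun _ : Fin A => S.insertNone
  have hmaps : Set.MapsTo (fun l (i : Fin A) => l[(i : ℕ)]?) (L : Set (List α))
      (T : Set (Fin A → Option α)) := fun l hl =>
    Fintype.mem_piFinset.2 fun _ =>
      Finset.mem_insertNone.2 fun a ha => (hL l hl).2 a (List.mem_of_getElem? ha)
  have hinj : Set.InjOn (fun l (i : Fin A) => l[(i : ℕ)]?) (L : Set (List α)) := by
    intro l₁ h₁ l₂ h₂ heq
    refine List.ext_getElem? fun i => ?_
    by_cases hi : i < A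
    · exact congrFun heq ⟨i, hi⟩
    · rw [List.getElem?_eq_none (by linarith [(hL l₁ h₁).1]),
        List.getElem?_eq_none (by linarith [(hL l₂ h₂).1])]
  calc #L ≤ #T := Finset.card_le_card_of_injOn _ hmaps hinj
    _ = (#S + 1) ^ A := by simp [T, Fintype.card_piFinset]

theorem List.Nodup.length_le_mul_pow {α : Type*} [DecidableEq α] {S : Finset α} {N A : ℕ}
    {h : List (ℕ × List α)} (hnd : h.Nodup)
    (hh : ∀ c ∈ h, c.1 < N ∧ c.2.length ≤ A ∧ ∀ a ∈ c.2, a ∈ S) :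
    h.length ≤ N * (#S + 1) ^ A := by
  have hsub : h.toFinset ⊆ Finset.range N ×ˢ h.toFinset.image Prod.snd := fun c hc =>
    Finset.mem_product.2
      ⟨Finset.mem_range.2 (hh c (List.mem_toFinset.1 hc)).1, Finset.mem_image_of_mem _ hc⟩
  have hsnd : #(h.toFinset.image Prod.snd) ≤ (#S + 1) ^ A :=
    Finset.card_le_pow_of_length_le fun l hl => by
      obtain ⟨c, hc, rfl⟩ := Finset.mem_image.1 hl
      exact (hh c (List.mem_toFinset.1 hc)).2
  calc h.length = #h.toFinset := (List.toFinset_card_of_nodup hnd).symm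
    _ ≤ N * #(h.toFinset.image Prod.snd) := by
      simpa only [Finset.card_product, Finset.card_range] using Finset.card_le_card hsub
    _ ≤ N * (#S + 1) ^ A := Nat.mul_le_mul_left N hsnd

theorem RunH.le_of_nodup {p : Prog} {x : List Bool} {v : Val} {n : ℕ}
    {h : List (ℕ × List Val)} (hrun : RunH p x v n h) (hnd : h.Nodup) {A B : ℕ}
    (hA : ∀ d ∈ p, d.arity ≤ A) (hB : ∀ d ∈ p, sizeOf d.body ≤ B) :
    n ≤ sizeOf p.entry + (B + 1) * (p.length * (x.length + 4) ^ A) := by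
  have hx : ∀ w ∈ [Val.str x], w ∈ Vx x := by simp [Vx]
  have hvals := (hrun.mem_of_baseClosed (baseClosed_Vx x) hx).2
  have hcalls : h.length ≤ p.length * (#(vxFinset x) + 1) ^ A := by
    refine hnd.length_le_mul_pow fun c hc => ?_
    obtain ⟨d, hf, hlen⟩ := hrun.calls_defined c hc
    refine ⟨(List.getElem?_eq_some_iff.1 hf).1, hlen ▸ hA d (List.mem_of_getElem? hf), ?_⟩
    simpa [← coe_vxFinset] using hvals c hc
  have hcard : #(vxFinset x) + 1 ≤ x.length + 4 := by linarith [card_vxFinset_le x]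
  calc n ≤ sizeOf p.entry + (B + 1) * h.length := hrun.size_le hB
    _ ≤ sizeOf p.entry + (B + 1) * (p.length * (x.length + 4) ^ A) := by
      gcongr
      exact hcalls.trans (Nat.mul_le_mul_left _ (Nat.pow_le_pow_left hcard A))

/-- a CF program that terminates on all inputs and has no call overlap
(no defined function is ever called twice with the same argument tuple, i.e. every
call history has no duplicates) runs in polynomial time — it is in CFpoly. -/
theorem no_call_overlap_implies_CFpoly (p : Prog) (hp : CFProg p)
    (hterm : ∀ x : List Bool, ∃ v, Run p x v)
    (hnov : ∀ (x : List Bool) (v : Val) (n : Nat) (h : List (Nat × List Val)),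
        RunH p x v n h → h.Nodup) :
    CFpolyProg p := by
  let A := (p.map Defn.arity).sum
  let B := (p.map fun d => sizeOf d.body).sum
  have hA : ∀ d ∈ p, d.arity ≤ A := fun d hd => List.le_sum_of_mem (List.mem_map_of_mem hd)
  have hB : ∀ d ∈ p, sizeOf d.body ≤ B := fun d hd =>
    List.le_sum_of_mem (List.mem_map_of_mem (f := fun d => sizeOf d.body) hd)
  refine ⟨hp, hterm, .C (sizeOf p.entry) + .C ((B + 1) * p.length) * (.X + .C 4) ^ A, ?_⟩
  rintro x n ⟨v, h, hrun⟩
  simpa [mul_assoc] using hrun.le_of_nodup (hnov x v n h hrun) hA hB
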